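/- arXiv:1706.06269 — 2 statements merged into one kernel-verified Lean document; each statement's English description precedes it below -/
import Mathlib

section
/- Let α₀ be a unit of R such that x^n − α₀ is basic irreducible over R, let α = α₀^{p^s}, write f = x^n − α₀, and let K = R[x]/⟨x^{np^s} − α⟩. Then: (a) if C = ⟨γ f^τ⟩ with 0 ≤ τ < p^s, then the RT distance of C equals nτ + 1; (b) if C = ⟨f^ω + γ f^t G⟩ with 0 < ω < p^s, G either 0 or a unit of K, and 0 ≤ t < ω when G ≠ 0, then the RT distance of C equals nκ + 1, where κ is the least nonnegative integer such that γ f^κ ∈ C; (c) if C = ⟨f^ω + γ f^t G, γ f^μ⟩ with 0 ≤ μ < ω < p^s, G either 0 or a unit of K, 0 ≤ t < μ when G ≠ 0, and μ < κ, where κ is the least nonnegative integer such that γ f^κ ∈ ⟨f^ω + γ f^t G⟩, then the RT distance of C equals nμ + 1. -/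
open Polynomial

/-- The unique representative of degree `< deg q` of an element of `A[x]/⟨q⟩`
(for `q` monic). -/
noncomputable def polyRep {A : Type} [CommRing A] (q : A[X]) (c : A[X] ⧸ Ideal.span {q}) :
    A[X] :=
  Function.surjInv Ideal.Quotient.mk_surjective c %ₘ q

open Classical in
/-- RT (Rosenbloom–Tsfasman) weight of a codeword: `1 + deg` of its representative,
and `0` for the zero codeword. -/
noncomputable def wRT {A : Type} [CommRing A] (q : A[X]) (c : A[X] ⧸ Ideal.span {q}) : ℕ :=
  if c = 0 then 0 else (polyRep q c).natDegree + 1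

/-- RT distance of a code (an ideal of `A[x]/⟨q⟩`); `0` for the zero code. -/
noncomputable def dRT {A : Type} [CommRing A] (q : A[X])
    (I : Ideal (A[X] ⧸ Ideal.span {q})) : ℕ :=
  sInf {w : ℕ | ∃ c ∈ I, c ≠ 0 ∧ w = wRT q c}

/-!
Write `k = R/γ` and `b̄` for the reduction of `b` mod `γ`. The RT distance of a code `C` in
`R[x]/⟨q⟩` is governed by its torsion code `Tor C = {b̄ | γ b ∈ C} ⊆ k[x]`: if `Tor C = ⟨h̄⟩`
with `h` monic and `deg h < deg q`, then `γ h ∈ C` has weight `deg h + 1`, while every nonzero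
codeword `r` gives a `b` with `b̄ ≠ 0`, `γ b ∈ ⟨r⟩` and `deg b̄ ≤ deg r` (take `b = r`, or
`r = γ b` when `r̄ = 0`), so `h̄ ∣ b̄` forces `deg r ≥ deg h`.

Since `γ² = 0` and the annihilator of `γ` is `⟨γ⟩`, `γ b` only depends on `b̄`. This gives
`Tor ⟨0⟩ = ⟨q̄⟩ = ⟨f̄ ^ p^s⟩` (Frobenius), `Tor (C + ⟨γ h⟩) = Tor C + ⟨h̄⟩`, and, `f̄` being
irreducible, `Tor C = ⟨f̄ ^ κ⟩` for the least `κ` with `γ f^κ ∈ C`. So each of the three codes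
has torsion code `⟨f̄ ^ j⟩` with `j = τ, κ, μ < p^s`, and distance `n j + 1`.
-/

namespace RTDistance

section Representative

variable {A : Type} [CommRing A] {q : A[X]}

theorem mk_polyRep (c : A[X] ⧸ Ideal.span {q}) :
    Ideal.Quotient.mk (Ideal.span {q}) (polyRep q c) = c := by
  rw [polyRep, Ideal.Quotient.eq.2 (Ideal.mem_span_singleton.2 (dvd_modByMonic_sub _ q)),
    Function.surjInv_eq Ideal.Quotient.mk_surjective]

variable [Nontrivial A]

theorem polyRep_mk (hq : q.Monic) {r : A[X]} (hr : r.degree < q.degree) :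
    polyRep q (Ideal.Quotient.mk (Ideal.span {q}) r) = r := by
  rw [polyRep, modByMonic_eq_of_dvd_sub hq (Ideal.mem_span_singleton.1
    (Ideal.Quotient.eq.1 (Function.surjInv_eq _ _))), (modByMonic_eq_self_iff hq).2 hr]

theorem mk_ne_zero_of_degree_lt (hq : q.Monic) {r : A[X]} (hr : r ≠ 0)
    (hdeg : r.degree < q.degree) : Ideal.Quotient.mk (Ideal.span {q}) r ≠ 0 := by
  rw [Ne, Ideal.Quotient.eq_zero_iff_mem, Ideal.mem_span_singleton,
    ← modByMonic_eq_zero_iff_dvd hq, (modByMonic_eq_self_iff hq).2 hdeg]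
  exact hr

theorem wRT_mk (hq : q.Monic) {r : A[X]} (hr : r ≠ 0) (hdeg : r.degree < q.degree) :
    wRT q (Ideal.Quotient.mk (Ideal.span {q}) r) = r.natDegree + 1 := by
  rw [wRT, if_neg (mk_ne_zero_of_degree_lt hq hr hdeg), polyRep_mk hq hdeg]

end Representative

theorem dRT_eq_of_exists_of_forall_le {A : Type} [CommRing A] {q : A[X]} {I : Ideal (A[X] ⧸ Ideal.span {q})}
    {d : ℕ} (hmem : ∃ c ∈ I, c ≠ 0 ∧ wRT q c = d) (hle : ∀ c ∈ I, c ≠ 0 → d ≤ wRT q c) :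
    dRT q I = d := by
  refine IsLeast.csInf_eq ⟨?_, ?_⟩
  · obtain ⟨c, hc, hc0, rfl⟩ := hmem
    exact ⟨c, hc, hc0, rfl⟩
  · rintro w ⟨c, hc, hc0, rfl⟩
    exact hle c hc hc0

section Torsion

variable {R : Type} [CommRing R] {γ : R}

local notation "π" => Ideal.Quotient.mk (Ideal.span (singleton γ))

theorem map_mk_span_eq_zero_iff (b : R[X]) : b.map π = 0 ↔ C γ ∣ b := by
  simp only [Polynomial.ext_iff, coeff_map, coeff_zero, Ideal.Quotient.eq_zero_iff_mem,
    Ideal.mem_span_singleton, C_dvd_iff_dvd_coeff]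

variable (γ) in
noncomputable def torsionIdeal (q : R[X]) (I : Ideal (R[X] ⧸ Ideal.span {q})) :
    Ideal (R ⧸ Ideal.span {γ})[X] :=
  ((I.comap (Ideal.Quotient.mk _)).colon {C γ}).map (mapRingHom π)

theorem torsionIdeal_mono {q : R[X]} {I J : Ideal (R[X] ⧸ Ideal.span {q})} (h : I ≤ J) :
    torsionIdeal γ q I ≤ torsionIdeal γ q J :=
  Ideal.map_mono (Submodule.colon_mono (Ideal.comap_mono h) subset_rfl)

variable (hann : ∀ a : R, γ * a = 0 ↔ γ ∣ a)
include hann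

theorem C_mul_eq_zero_iff (b : R[X]) : C γ * b = 0 ↔ b.map π = 0 := by
  rw [map_mk_span_eq_zero_iff, C_dvd_iff_dvd_coeff, Polynomial.ext_iff]
  simp only [coeff_C_mul, coeff_zero, hann]

theorem C_mul_eq_C_mul_of_map_eq {b b' : R[X]} (h : b.map π = b'.map π) :
    C γ * b = C γ * b' := by
  rw [← sub_eq_zero, ← mul_sub, C_mul_eq_zero_iff hann, Polynomial.map_sub, h, sub_self]

theorem map_mem_torsionIdeal_iff {q : R[X]} {I : Ideal (R[X] ⧸ Ideal.span {q})} (b : R[X]) :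
    b.map π ∈ torsionIdeal γ q I ↔ Ideal.Quotient.mk _ (C γ * b) ∈ I := by
  rw [torsionIdeal, Ideal.mem_map_iff_of_surjective _
    (map_surjective _ Ideal.Quotient.mk_surjective)]
  constructor
  · rintro ⟨b', hb', hbb'⟩
    rw [Submodule.mem_colon_singleton, smul_eq_mul, Ideal.mem_comap, mul_comm] at hb'
    rwa [C_mul_eq_C_mul_of_map_eq hann hbb'.symm]
  · intro hb
    refine ⟨b, ?_, rfl⟩
    rwa [Submodule.mem_colon_singleton, smul_eq_mul, Ideal.mem_comap, mul_comm]

theorem torsionIdeal_bot {q : R[X]} (hq : q.Monic) :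
    torsionIdeal γ q ⊥ = Ideal.span {q.map π} := by
  ext x
  obtain ⟨b, rfl⟩ := map_surjective _ Ideal.Quotient.mk_surjective x
  rw [map_mem_torsionIdeal_iff hann, Ideal.mem_bot, Ideal.Quotient.eq_zero_iff_mem,
    Ideal.mem_span_singleton, Ideal.mem_span_singleton]
  constructor
  · rintro ⟨w, hw⟩
    have hw0 : w.map π = 0 := by
      rw [← (hq.map π).mul_right_eq_zero_iff, ← Polynomial.map_mul, ← hw, Polynomial.map_mul,
        (map_mk_span_eq_zero_iff _).2 dvd_rfl, zero_mul]
    obtain ⟨w', rfl⟩ := (map_mk_span_eq_zero_iff w).1 hw0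
    have : C γ * (b - q * w') = 0 := by rw [mul_sub, hw]; ring
    rw [C_mul_eq_zero_iff hann, Polynomial.map_sub, sub_eq_zero, Polynomial.map_mul] at this
    exact ⟨_, this⟩
  · rintro ⟨w, hw⟩
    obtain ⟨w', rfl⟩ := map_surjective _ Ideal.Quotient.mk_surjective w
    rw [← Polynomial.map_mul] at hw
    rw [C_mul_eq_C_mul_of_map_eq hann hw, mul_left_comm]
    exact dvd_mul_right _ _

theorem torsionIdeal_sup_span_C_mul {q : R[X]} (I : Ideal (R[X] ⧸ Ideal.span {q})) (h : R[X]) :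
    torsionIdeal γ q (I ⊔ Ideal.span {Ideal.Quotient.mk _ (C γ * h)}) =
      torsionIdeal γ q I ⊔ Ideal.span {h.map π} := by
  apply le_antisymm
  · intro x hx
    obtain ⟨b, rfl⟩ := map_surjective _ Ideal.Quotient.mk_surjective x
    rw [map_mem_torsionIdeal_iff hann, Submodule.mem_sup] at hx
    obtain ⟨y, hy, z, hz, hyz⟩ := hx
    obtain ⟨u, rfl⟩ := Ideal.mem_span_singleton'.1 hz
    obtain ⟨v, rfl⟩ := Ideal.Quotient.mk_surjective u
    have hrest : (b - v * h).map π ∈ torsionIdeal γ q I := by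
      have hy' : Ideal.Quotient.mk _ (C γ * (b - v * h)) = y := by
        rw [mul_sub, map_sub, ← hyz, map_mul, map_mul, map_mul]
        ring
      rwa [map_mem_torsionIdeal_iff hann, hy']
    have hsplit : b.map π = (b - v * h).map π + v.map π * h.map π := by
      rw [Polynomial.map_sub, Polynomial.map_mul]
      ring
    rw [hsplit]
    exact add_mem (Ideal.mem_sup_left hrest)
      (Ideal.mem_sup_right (Ideal.mul_mem_left _ _ (Ideal.mem_span_singleton_self _)))
  · refine sup_le (torsionIdeal_mono le_sup_left) ?_
    rw [Ideal.span_le, Set.singleton_subset_iff, SetLike.mem_coe, map_mem_torsionIdeal_iff hann]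
    exact Ideal.mem_sup_right (Ideal.mem_span_singleton_self _)

theorem torsionIdeal_eq_span_pow_of_isLeast [(Ideal.span {γ}).IsMaximal] {q f : R[X]}
    (hf : Irreducible (f.map π)) {I : Ideal (R[X] ⧸ Ideal.span {q})} {κ : ℕ}
    (hκ : IsLeast {j : ℕ | Ideal.Quotient.mk _ (C γ) * Ideal.Quotient.mk _ f ^ j ∈ I} κ) :
    torsionIdeal γ q I = Ideal.span {f.map π ^ κ} := by
  let := Ideal.Quotient.field (Ideal.span {γ})
  have hmem : ∀ j, f.map π ^ j ∈ torsionIdeal γ q I ↔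
      Ideal.Quotient.mk _ (C γ) * Ideal.Quotient.mk _ f ^ j ∈ I := fun j => by
    rw [← Polynomial.map_pow, map_mem_torsionIdeal_iff hann, map_mul, map_pow]
  obtain ⟨d, hd⟩ := (IsPrincipalIdealRing.principal (torsionIdeal γ q I)).principal
  rw [Ideal.submodule_span_eq] at hd
  have hdκ : d ∣ f.map π ^ κ := by
    rw [← Ideal.mem_span_singleton, ← hd]
    exact (hmem κ).2 hκ.1
  obtain ⟨j, hjκ, hassoc⟩ := (dvd_prime_pow hf.prime κ).1 hdκ
  have hTj : torsionIdeal γ q I = Ideal.span {f.map π ^ j} :=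
    hd.trans (Ideal.span_singleton_eq_span_singleton.2 hassoc)
  have hκj : κ ≤ j := hκ.2 ((hmem j).1 (hTj ▸ Ideal.mem_span_singleton_self _))
  rw [hTj, le_antisymm hjκ hκj]

theorem exists_dvd_C_mul_natDegree_map_le {r : R[X]} (hr : r ≠ 0) :
    ∃ b : R[X], b.map π ≠ 0 ∧ r ∣ C γ * b ∧ (b.map π).natDegree ≤ r.natDegree := by
  by_cases hr0 : r.map π = 0
  · obtain ⟨b, rfl⟩ := (map_mk_span_eq_zero_iff r).1 hr0
    have hb0 : b.map π ≠ 0 := fun h => hr ((C_mul_eq_zero_iff hann b).2 h)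
    refine ⟨b, hb0, dvd_rfl, le_natDegree_of_ne_zero ?_⟩
    rw [coeff_C_mul, Ne, hann, ← Ideal.mem_span_singleton, ← Ideal.Quotient.eq_zero_iff_mem,
      ← coeff_map]
    exact leadingCoeff_ne_zero.2 hb0
  · exact ⟨r, hr0, dvd_mul_left r _, natDegree_map_le⟩

theorem dRT_eq_natDegree_add_one [(Ideal.span {γ}).IsPrime] {q h : R[X]} (hq : q.Monic)
    (hh : h.Monic) (hdeg : h.natDegree < q.natDegree) {I : Ideal (R[X] ⧸ Ideal.span {q})}
    (hI : torsionIdeal γ q I = Ideal.span {h.map π}) :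
    dRT q I = h.natDegree + 1 := by
  have : Nontrivial R := (Ideal.Quotient.mk (Ideal.span {γ})).domain_nontrivial
  have hmem : ∀ {b : R[X]}, Ideal.Quotient.mk _ (C γ * b) ∈ I ↔ h.map π ∣ b.map π := by
    intro b
    rw [← map_mem_torsionIdeal_iff hann, hI, Ideal.mem_span_singleton]
  have hγh : C γ * h ≠ 0 := by
    rw [Ne, C_mul_eq_zero_iff hann]
    exact (hh.map π).ne_zero
  have hγh_deg : (C γ * h).natDegree = h.natDegree := by
    refine natDegree_C_mul_of_mul_ne_zero ?_
    rw [hh.leadingCoeff, mul_one]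
    rintro rfl
    exact hγh (by rw [C_0, zero_mul])
  apply dRT_eq_of_exists_of_forall_le
  · refine ⟨_, hmem.2 dvd_rfl, ?_, ?_⟩
    · exact mk_ne_zero_of_degree_lt hq hγh (degree_lt_degree (hγh_deg ▸ hdeg))
    · rw [wRT_mk hq hγh (degree_lt_degree (hγh_deg ▸ hdeg)), hγh_deg]
  · intro c hc hc0
    have hr : polyRep q c ≠ 0 := by
      rintro hr
      rw [← mk_polyRep c, hr, map_zero] at hc0
      exact hc0 rfl
    obtain ⟨b, hb0, ⟨t, ht⟩, hb_deg⟩ := exists_dvd_C_mul_natDegree_map_le hann hr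
    have hbI : Ideal.Quotient.mk _ (C γ * b) ∈ I := by
      rw [ht, map_mul, mk_polyRep]
      exact I.mul_mem_right _ hc
    have := natDegree_le_of_dvd (hmem.1 hbI) hb0
    rw [hh.natDegree_map] at this
    rw [wRT, if_neg hc0]
    omega

theorem dRT_eq_of_torsionIdeal_eq_span_pow [(Ideal.span {γ}).IsPrime] {q f : R[X]} {e j : ℕ}
    (hq : q.Monic) (hf : f.Monic) (hqf : q.natDegree = f.natDegree * e) (hf0 : 0 < f.natDegree)
    (hj : j < e) {I : Ideal (R[X] ⧸ Ideal.span {q})}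
    (hI : torsionIdeal γ q I = Ideal.span {f.map π ^ j}) :
    dRT q I = f.natDegree * j + 1 := by
  have hfj : (f ^ j).natDegree = f.natDegree * j := by rw [hf.natDegree_pow, mul_comm]
  rw [← hfj]
  refine dRT_eq_natDegree_add_one hann hq (hf.pow j) ?_ (by rwa [Polynomial.map_pow])
  rw [hfj, hqf]
  exact Nat.mul_lt_mul_of_pos_left hj hf0

end Torsion

theorem span_pow_sup_span_pow_of_le {S : Type*} [CommSemiring S] (x : S) {i j : ℕ}
    (hji : j ≤ i) : Ideal.span {x ^ i} ⊔ Ideal.span {x ^ j} = Ideal.span {x ^ j} :=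
  sup_eq_right.2 (Ideal.span_singleton_le_span_singleton.2 (pow_dvd_pow x hji))

theorem isMaximal_of_forall_mem_iff_not_isUnit {R : Type*} [CommRing R] {I : Ideal R} (h : ∀ a, a ∈ I ↔ ¬IsUnit a) :
    I.IsMaximal := by
  refine Ideal.isMaximal_iff.2 ⟨fun h1 => (h 1).1 h1 isUnit_one, fun J x _ hxI hxJ => ?_⟩
  rw [h, not_not] at hxI
  exact (J.eq_top_of_isUnit_mem hxJ hxI).symm ▸ Submodule.mem_top

theorem mul_eq_zero_iff_dvd_of_sq_eq_zero {R : Type*} [CommRing R] {γ : R} (hγ : γ ≠ 0) (hγ2 : γ ^ 2 = 0)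
    (hmax : ∀ a : R, a ∈ Ideal.span {γ} ↔ ¬IsUnit a) (a : R) : γ * a = 0 ↔ γ ∣ a := by
  constructor
  · intro h
    rw [← Ideal.mem_span_singleton, hmax]
    exact fun hu => hγ ((hu.mul_left_eq_zero).1 h)
  · rintro ⟨b, rfl⟩
    rw [← mul_assoc, ← sq, hγ2, zero_mul]

theorem charP_of_natCard_eq_prime_pow {F : Type*} [Field F] {p m : ℕ} [hp : Fact p.Prime]
    (h : Nat.card F = p ^ m) : CharP F p := by
  have : Finite F := Nat.finite_of_card_ne_zero (h ▸ pow_ne_zero _ hp.out.ne_zero)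
  let := Fintype.ofFinite F
  exact charP_of_card_eq_prime_pow (by rw [Fintype.card_eq_nat_card, h])

theorem X_pow_sub_C_pow_char_pow {S : Type*} [CommRing S] {p : ℕ} [Fact p.Prime] [CharP S p]
    (n s : ℕ) (a : S) : (X ^ n - C a) ^ p ^ s = X ^ (n * p ^ s) - C (a ^ p ^ s) := by
  rw [sub_pow_char_pow, ← pow_mul, C_pow]

end RTDistance

open RTDistance in
theorem stmt14_general {R : Type} [CommRing R]
    (p m s n : ℕ) (hp : p.Prime)
    (γ : R) (hγ : γ ≠ 0) (hγ2 : γ ^ 2 = 0)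
    (hmax : ∀ a : R, a ∈ Ideal.span {γ} ↔ ¬ IsUnit a)
    (hres : Nat.card (R ⧸ Ideal.span {γ}) = p ^ m)
    (α₀ : R)
    (hirr : Irreducible ((X ^ n - C α₀ : R[X]).map (Ideal.Quotient.mk (Ideal.span {γ})))) :
    (∀ τ, τ < p ^ s →
      dRT (X ^ (n * p ^ s) - C (α₀ ^ p ^ s))
        (Ideal.span {Ideal.Quotient.mk
          (Ideal.span {(X ^ (n * p ^ s) - C (α₀ ^ p ^ s) : R[X])})
          (C γ * (X ^ n - C α₀) ^ τ)}) = n * τ + 1) ∧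
    (∀ ω t : ℕ, ∀ G : R[X] ⧸ Ideal.span {(X ^ (n * p ^ s) - C (α₀ ^ p ^ s) : R[X])},
      0 < ω → ω < p ^ s → (G = 0 ∨ IsUnit G) → (G ≠ 0 → t < ω) →
      ∀ κ : ℕ,
        IsLeast {k : ℕ |
          Ideal.Quotient.mk (Ideal.span {(X ^ (n * p ^ s) - C (α₀ ^ p ^ s) : R[X])}) (C γ) *
            (Ideal.Quotient.mk (Ideal.span {(X ^ (n * p ^ s) - C (α₀ ^ p ^ s) : R[X])})
              (X ^ n - C α₀)) ^ k ∈
          Ideal.span {Ideal.Quotient.mk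
              (Ideal.span {(X ^ (n * p ^ s) - C (α₀ ^ p ^ s) : R[X])})
              ((X ^ n - C α₀) ^ ω) +
            Ideal.Quotient.mk (Ideal.span {(X ^ (n * p ^ s) - C (α₀ ^ p ^ s) : R[X])})
              (C γ * (X ^ n - C α₀) ^ t) * G}} κ →
        dRT (X ^ (n * p ^ s) - C (α₀ ^ p ^ s))
          (Ideal.span {Ideal.Quotient.mk
              (Ideal.span {(X ^ (n * p ^ s) - C (α₀ ^ p ^ s) : R[X])})
              ((X ^ n - C α₀) ^ ω) +
            Ideal.Quotient.mk (Ideal.span {(X ^ (n * p ^ s) - C (α₀ ^ p ^ s) : R[X])})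
              (C γ * (X ^ n - C α₀) ^ t) * G}) = n * κ + 1) ∧
    (∀ ω t μ : ℕ, ∀ G : R[X] ⧸ Ideal.span {(X ^ (n * p ^ s) - C (α₀ ^ p ^ s) : R[X])},
      μ < ω → ω < p ^ s → (G = 0 ∨ IsUnit G) → (G ≠ 0 → t < μ) →
      ∀ κ : ℕ,
        IsLeast {k : ℕ |
          Ideal.Quotient.mk (Ideal.span {(X ^ (n * p ^ s) - C (α₀ ^ p ^ s) : R[X])}) (C γ) *
            (Ideal.Quotient.mk (Ideal.span {(X ^ (n * p ^ s) - C (α₀ ^ p ^ s) : R[X])})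
              (X ^ n - C α₀)) ^ k ∈
          Ideal.span {Ideal.Quotient.mk
              (Ideal.span {(X ^ (n * p ^ s) - C (α₀ ^ p ^ s) : R[X])})
              ((X ^ n - C α₀) ^ ω) +
            Ideal.Quotient.mk (Ideal.span {(X ^ (n * p ^ s) - C (α₀ ^ p ^ s) : R[X])})
              (C γ * (X ^ n - C α₀) ^ t) * G}} κ →
        μ < κ →
        dRT (X ^ (n * p ^ s) - C (α₀ ^ p ^ s))
          (Ideal.span {Ideal.Quotient.mk
              (Ideal.span {(X ^ (n * p ^ s) - C (α₀ ^ p ^ s) : R[X])})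
              ((X ^ n - C α₀) ^ ω) +
            Ideal.Quotient.mk (Ideal.span {(X ^ (n * p ^ s) - C (α₀ ^ p ^ s) : R[X])})
              (C γ * (X ^ n - C α₀) ^ t) * G,
            Ideal.Quotient.mk (Ideal.span {(X ^ (n * p ^ s) - C (α₀ ^ p ^ s) : R[X])})
              (C γ * (X ^ n - C α₀) ^ μ)}) = n * μ + 1) := by
  have : Nontrivial R := nontrivial_of_ne γ 0 hγ
  have hann := mul_eq_zero_iff_dvd_of_sq_eq_zero hγ hγ2 hmax
  have := isMaximal_of_forall_mem_iff_not_isUnit hmax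
  let := Ideal.Quotient.field (Ideal.span {γ})
  have := Fact.mk hp
  have := charP_of_natCard_eq_prime_pow hres
  set π := Ideal.Quotient.mk (Ideal.span {γ})
  set f : R[X] := X ^ n - C α₀
  set q : R[X] := X ^ (n * p ^ s) - C (α₀ ^ p ^ s)
  have hn : 0 < n := by
    simpa [f, natDegree_X_pow_sub_C] using hirr.natDegree_pos
  have hf : f.Monic := monic_X_pow_sub_C _ hn.ne'
  have hq : q.Monic := monic_X_pow_sub_C _ (mul_ne_zero hn.ne' (pow_ne_zero _ hp.ne_zero))
  have hfn : f.natDegree = n := natDegree_X_pow_sub_C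
  have hdist : ∀ {I : Ideal (R[X] ⧸ Ideal.span {q})} {j : ℕ}, j < p ^ s →
      torsionIdeal γ q I = Ideal.span {f.map π ^ j} → dRT q I = n * j + 1 := fun hj hI =>
    hfn ▸ dRT_eq_of_torsionIdeal_eq_span_pow hann hq hf
      (by rw [hfn, natDegree_X_pow_sub_C]) (hfn ▸ hn) hj hI
  have hbot : torsionIdeal γ q ⊥ = Ideal.span {f.map π ^ p ^ s} := by
    rw [torsionIdeal_bot hann hq, Polynomial.map_sub, Polynomial.map_sub, Polynomial.map_pow,
      Polynomial.map_pow, map_X, map_C, map_C, map_pow, X_pow_sub_C_pow_char_pow]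
  have hγγ : Ideal.Quotient.mk (Ideal.span {q}) (C γ) * Ideal.Quotient.mk _ (C γ) = 0 := by
    rw [← map_mul, ← C_mul, ← sq, hγ2, C_0, map_zero]
  refine ⟨fun τ hτ => hdist hτ ?_, fun ω t G _ hω _ _ κ hκ => hdist ?_ ?_,
    fun ω t μ G hμω hω _ _ κ hκ hμκ => hdist (hμω.trans hω) ?_⟩
  · rw [← bot_sup_eq (Ideal.span {Ideal.Quotient.mk (Ideal.span {q}) (C γ * f ^ τ)}),
      torsionIdeal_sup_span_C_mul hann, hbot, Polynomial.map_pow,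
      span_pow_sup_span_pow_of_le _ hτ.le]
  · -- `γ (f^ω + γ f^t G) = γ f^ω`, so `κ ≤ ω`
    refine (hκ.2 (Ideal.mem_span_singleton'.2 ⟨Ideal.Quotient.mk _ (C γ), ?_⟩)).trans_lt hω
    simp only [map_mul, map_pow]
    linear_combination (Ideal.Quotient.mk _ f ^ t * G) * hγγ
  · exact torsionIdeal_eq_span_pow_of_isLeast hann hirr hκ
  · rw [Ideal.span_insert, torsionIdeal_sup_span_C_mul hann,
      torsionIdeal_eq_span_pow_of_isLeast hann hirr hκ, Polynomial.map_pow,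
      span_pow_sup_span_pow_of_le _ hμκ.le]

/-- RT distances of the Type II, III and IV codes of
`K = R[x]/⟨x^{np^s} − α₀^{p^s}⟩`, where `f = x^n − α₀` is basic irreducible. -/
theorem stmt14 {R : Type} [CommRing R] [Finite R]
    (p m s n : ℕ) (hp : p.Prime) (hm : 0 < m) (hs : 0 < s) (hn : 0 < n)
    (hnp : Nat.gcd n p = 1)
    (γ : R) (hγ : γ ≠ 0) (hγ2 : γ ^ 2 = 0)
    (hmax : ∀ a : R, a ∈ Ideal.span {γ} ↔ ¬ IsUnit a)
    (hres : Nat.card (R ⧸ Ideal.span {γ}) = p ^ m)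
    (α₀ : R) (hα₀ : IsUnit α₀)
    (hirr : Irreducible ((X ^ n - C α₀ : R[X]).map (Ideal.Quotient.mk (Ideal.span {γ})))) :
    (∀ τ, τ < p ^ s →
      dRT (X ^ (n * p ^ s) - C (α₀ ^ p ^ s))
        (Ideal.span {Ideal.Quotient.mk
          (Ideal.span {(X ^ (n * p ^ s) - C (α₀ ^ p ^ s) : R[X])})
          (C γ * (X ^ n - C α₀) ^ τ)}) = n * τ + 1) ∧
    (∀ ω t : ℕ, ∀ G : R[X] ⧸ Ideal.span {(X ^ (n * p ^ s) - C (α₀ ^ p ^ s) : R[X])},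
      0 < ω → ω < p ^ s → (G = 0 ∨ IsUnit G) → (G ≠ 0 → t < ω) →
      ∀ κ : ℕ,
        IsLeast {k : ℕ |
          Ideal.Quotient.mk (Ideal.span {(X ^ (n * p ^ s) - C (α₀ ^ p ^ s) : R[X])}) (C γ) *
            (Ideal.Quotient.mk (Ideal.span {(X ^ (n * p ^ s) - C (α₀ ^ p ^ s) : R[X])})
              (X ^ n - C α₀)) ^ k ∈
          Ideal.span {Ideal.Quotient.mk
              (Ideal.span {(X ^ (n * p ^ s) - C (α₀ ^ p ^ s) : R[X])})
              ((X ^ n - C α₀) ^ ω) +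
            Ideal.Quotient.mk (Ideal.span {(X ^ (n * p ^ s) - C (α₀ ^ p ^ s) : R[X])})
              (C γ * (X ^ n - C α₀) ^ t) * G}} κ →
        dRT (X ^ (n * p ^ s) - C (α₀ ^ p ^ s))
          (Ideal.span {Ideal.Quotient.mk
              (Ideal.span {(X ^ (n * p ^ s) - C (α₀ ^ p ^ s) : R[X])})
              ((X ^ n - C α₀) ^ ω) +
            Ideal.Quotient.mk (Ideal.span {(X ^ (n * p ^ s) - C (α₀ ^ p ^ s) : R[X])})
              (C γ * (X ^ n - C α₀) ^ t) * G}) = n * κ + 1) ∧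
    (∀ ω t μ : ℕ, ∀ G : R[X] ⧸ Ideal.span {(X ^ (n * p ^ s) - C (α₀ ^ p ^ s) : R[X])},
      μ < ω → ω < p ^ s → (G = 0 ∨ IsUnit G) → (G ≠ 0 → t < μ) →
      ∀ κ : ℕ,
        IsLeast {k : ℕ |
          Ideal.Quotient.mk (Ideal.span {(X ^ (n * p ^ s) - C (α₀ ^ p ^ s) : R[X])}) (C γ) *
            (Ideal.Quotient.mk (Ideal.span {(X ^ (n * p ^ s) - C (α₀ ^ p ^ s) : R[X])})
              (X ^ n - C α₀)) ^ k ∈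
          Ideal.span {Ideal.Quotient.mk
              (Ideal.span {(X ^ (n * p ^ s) - C (α₀ ^ p ^ s) : R[X])})
              ((X ^ n - C α₀) ^ ω) +
            Ideal.Quotient.mk (Ideal.span {(X ^ (n * p ^ s) - C (α₀ ^ p ^ s) : R[X])})
              (C γ * (X ^ n - C α₀) ^ t) * G}} κ →
        μ < κ →
        dRT (X ^ (n * p ^ s) - C (α₀ ^ p ^ s))
          (Ideal.span {Ideal.Quotient.mk
              (Ideal.span {(X ^ (n * p ^ s) - C (α₀ ^ p ^ s) : R[X])})
              ((X ^ n - C α₀) ^ ω) +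
            Ideal.Quotient.mk (Ideal.span {(X ^ (n * p ^ s) - C (α₀ ^ p ^ s) : R[X])})
              (C γ * (X ^ n - C α₀) ^ t) * G,
            Ideal.Quotient.mk (Ideal.span {(X ^ (n * p ^ s) - C (α₀ ^ p ^ s) : R[X])})
              (C γ * (X ^ n - C α₀) ^ μ)}) = n * μ + 1) :=
  stmt14_general p m s n hp γ hγ hγ2 hmax hres α₀ hirr
end

section
/- Let C = ⟨(x^n − λ₀)^ν⟩ be an ideal of R[x]/⟨x^{np^s} − λ⟩, where 0 ≤ ν ≤ e·p^s. Then the RT distance of C is: 1 if 0 ≤ ν ≤ (e−1)p^s; nν − n(e−1)p^s + 1 if (e−1)p^s + 1 ≤ ν ≤ ep^s − 1; and 0 if ν = e·p^s. -/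
open Polynomial

/-!
Write `u = X ^ n - C λ₀` and `q = X ^ (n p^s) - C λ`. Since `R/⟨γ⟩` has characteristic `p`,
Frobenius gives `u ^ p^s = q + γ (w + u K)`. In `R[X]/⟨q⟩` the element `u` is nilpotent, so
`w + u K` is a unit and `u ^ ((e-1) p^s + t)` generates the same ideal as `γ^(e-1) u^t`, which
has degree `n t` for `t < p^s`; also `u ^ (e p^s) = 0`. Conversely, every element of that ideal
is represented by `γ^(e-1) G` with `G` reduced modulo `q`. As `γ^(e-1) b = 0` exactly when
`γ ∣ b`, its degree is that of the image `Ḡ` over the residue field, and `ū ^ t` divides `Ḡ`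
because `q̄ = ū ^ p^s`.
-/

section Representative

variable {A : Type} [CommRing A] {q : A[X]}

theorem mk_modByMonic (f : A[X]) :
    Ideal.Quotient.mk (Ideal.span {q}) (f %ₘ q) = Ideal.Quotient.mk (Ideal.span {q}) f :=
  Ideal.Quotient.eq.2 (Ideal.mem_span_singleton.2 (dvd_modByMonic_sub f q))

theorem mk_polyRep (c : A[X] ⧸ Ideal.span {q}) :
    Ideal.Quotient.mk (Ideal.span {q}) (polyRep q c) = c := by
  rw [polyRep, mk_modByMonic]
  exact Function.surjInv_eq Ideal.Quotient.mk_surjective c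

theorem polyRep_mk (hq : q.Monic) (f : A[X]) :
    polyRep q (Ideal.Quotient.mk (Ideal.span {q}) f) = f %ₘ q :=
  modByMonic_eq_of_dvd_sub hq <| Ideal.mem_span_singleton.1 <| Ideal.Quotient.eq.1 <|
    Function.surjInv_eq Ideal.Quotient.mk_surjective _

theorem wRT_of_ne_zero {c : A[X] ⧸ Ideal.span {q}} (hc : c ≠ 0) :
    wRT q c = (polyRep q c).natDegree + 1 :=
  if_neg hc

theorem mk_ne_zero_of_degree_lt [Nontrivial A] (hq : q.Monic) {f : A[X]} (hf : f ≠ 0)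
    (hdeg : f.degree < q.degree) : Ideal.Quotient.mk (Ideal.span {q}) f ≠ 0 := by
  rw [Ne, Ideal.Quotient.eq_zero_iff_mem, Ideal.mem_span_singleton,
    ← modByMonic_eq_zero_iff_dvd hq, (modByMonic_eq_self_iff hq).2 hdeg]
  exact hf

theorem wRT_mk_of_degree_lt [Nontrivial A] (hq : q.Monic) {f : A[X]} (hf : f ≠ 0)
    (hdeg : f.degree < q.degree) :
    wRT q (Ideal.Quotient.mk (Ideal.span {q}) f) = f.natDegree + 1 := by
  rw [wRT_of_ne_zero (mk_ne_zero_of_degree_lt hq hf hdeg), polyRep_mk hq,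
    (modByMonic_eq_self_iff hq).2 hdeg]

theorem dRT_eq_of_forall_le {I : Ideal (A[X] ⧸ Ideal.span {q})} {c : A[X] ⧸ Ideal.span {q}}
    (hcI : c ∈ I) (hc : c ≠ 0) (hle : ∀ c' ∈ I, c' ≠ 0 → wRT q c ≤ wRT q c') :
    dRT q I = wRT q c :=
  IsLeast.csInf_eq ⟨⟨c, hcI, hc, rfl⟩, by rintro _ ⟨c', hc'I, hc', rfl⟩; exact hle c' hc'I hc'⟩

theorem dRT_bot : dRT q ⊥ = 0 := by
  simp [dRT]

end Representative

section ChainRing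

variable {R : Type*} [CommRing R] {γ : R} {e : ℕ}

theorem Ideal.isMaximal_of_forall_mem_iff_not_isUnit {I : Ideal R}
    (h : ∀ a, a ∈ I ↔ ¬IsUnit a) : I.IsMaximal :=
  Ideal.isMaximal_iff.2 ⟨fun h1 => (h 1).1 h1 isUnit_one, fun J x _ hx hxJ =>
    (Ideal.eq_top_of_isUnit_mem J hxJ (not_not.1 ((h x).not.1 hx))) ▸ Submodule.mem_top⟩

theorem pow_pred_mul_eq_zero_iff_mem_span (hγ : γ ^ (e - 1) ≠ 0) (hγe : γ ^ e = 0)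
    (hmax : ∀ a : R, a ∈ Ideal.span {γ} ↔ ¬IsUnit a) (b : R) :
    γ ^ (e - 1) * b = 0 ↔ b ∈ Ideal.span {γ} := by
  refine ⟨fun hb => (hmax b).2 fun hu => hγ (hu.mul_left_eq_zero.1 hb), fun hb => ?_⟩
  obtain ⟨c, rfl⟩ := Ideal.mem_span_singleton.1 hb
  have he : e ≠ 0 := by rintro rfl; simp_all
  rw [← mul_assoc, ← pow_succ, Nat.sub_add_cancel (Nat.one_le_iff_ne_zero.2 he), hγe, zero_mul]

end ChainRing

theorem charP_of_natCard_eq_prime_pow {k : Type*} [CommRing k] [IsDomain k] {p m : ℕ}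
    [hp : Fact p.Prime] (hk : Nat.card k = p ^ m) : CharP k p :=
  have : Finite k := Nat.finite_of_card_ne_zero (hk ▸ pow_ne_zero m hp.out.ne_zero)
  have := Fintype.ofFinite k
  charP_of_card_eq_prime_pow (Fintype.card_eq_nat_card.trans hk)

namespace Polynomial

variable {R : Type*} [CommRing R]

theorem map_mk_span_singleton_eq_zero_iff {a : R} {f : R[X]} :
    f.map (Ideal.Quotient.mk (Ideal.span {a})) = 0 ↔ C a ∣ f := by
  simp [Polynomial.ext_iff, C_dvd_iff_dvd_coeff, Ideal.Quotient.eq_zero_iff_mem,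
    Ideal.mem_span_singleton]

theorem Monic.C_dvd_of_C_dvd_mul {u f : R[X]} (hu : u.Monic) {a : R} (h : C a ∣ u * f) :
    C a ∣ f := by
  rw [← map_mk_span_singleton_eq_zero_iff] at h ⊢
  rwa [Polynomial.map_mul, (hu.map _).mul_right_eq_zero_iff] at h

/-- The factor `X ^ n - C b` in the error term is what later makes the cofactor of `a` a unit. -/
theorem exists_X_pow_sub_C_pow_char_pow_eq {a : R} {p : ℕ} [Fact p.Prime]
    [CharP (R ⧸ Ideal.span {a}) p] (b : R) {n : ℕ} (hn : n ≠ 0) (s : ℕ) :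
    ∃ K : R[X], (X ^ n - C b) ^ p ^ s =
      X ^ (n * p ^ s) - C (b ^ p ^ s) + C a * ((X ^ n - C b) * K) := by
  set u : R[X] := X ^ n - C b
  have hdvd_u : u ∣ u ^ p ^ s - (X ^ (n * p ^ s) - C (b ^ p ^ s)) := by
    rw [pow_mul, C_pow]
    exact dvd_sub (dvd_pow_self u (pow_ne_zero s (Fact.out : p.Prime).ne_zero))
      (sub_dvd_pow_sub_pow (X ^ n) (C b) (p ^ s))
  obtain ⟨G, hG⟩ := hdvd_u
  have hCG : C a ∣ G := by
    refine (monic_X_pow_sub_C b hn).C_dvd_of_C_dvd_mul ?_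
    rw [← hG, ← map_mk_span_singleton_eq_zero_iff]
    simp only [u, Polynomial.map_sub, Polynomial.map_pow, map_X, map_C]
    rw [sub_pow_char_pow, ← pow_mul, ← C_pow, ← map_pow, sub_self]
  obtain ⟨K, rfl⟩ := hCG
  exact ⟨K, by linear_combination hG⟩

variable {I : Ideal R} {a : R}

theorem support_C_mul_eq_support_map (ha : ∀ b, a * b = 0 ↔ b ∈ I) (f : R[X]) :
    (C a * f).support = (f.map (Ideal.Quotient.mk I)).support := by
  ext i
  simp [coeff_C_mul, ha, Ideal.Quotient.eq_zero_iff_mem]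

theorem natDegree_C_mul_eq_natDegree_map (ha : ∀ b, a * b = 0 ↔ b ∈ I) (f : R[X]) :
    (C a * f).natDegree = (f.map (Ideal.Quotient.mk I)).natDegree := by
  simp only [natDegree, degree, support_C_mul_eq_support_map ha]

theorem C_mul_eq_zero_iff_map_eq_zero (ha : ∀ b, a * b = 0 ↔ b ∈ I) {f : R[X]} :
    C a * f = 0 ↔ f.map (Ideal.Quotient.mk I) = 0 := by
  rw [← support_eq_empty, support_C_mul_eq_support_map ha, support_eq_empty]

end Polynomial

section ConstacyclicCode

variable {R : Type} [CommRing R] {γ : R} {e P : ℕ} {q u h : R[X]}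

theorem map_eq_pow_of_pow_eq_add (hQ : u ^ P = q + C γ * h) :
    q.map (Ideal.Quotient.mk (Ideal.span {γ})) =
      (u.map (Ideal.Quotient.mk (Ideal.span {γ}))) ^ P := by
  rw [← Polynomial.map_pow, hQ, Polynomial.map_add, Polynomial.map_mul, map_C,
    Ideal.Quotient.mk_singleton_self, C_0, zero_mul, add_zero]

theorem mk_pow_mul_eq (hQ : u ^ P = q + C γ * h) (j : ℕ) :
    Ideal.Quotient.mk (Ideal.span {q}) (u ^ (j * P)) =
      Ideal.Quotient.mk (Ideal.span {q}) (C (γ ^ j) * h ^ j) := by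
  rw [mul_comm, pow_mul, hQ, map_pow, map_add, Ideal.Quotient.mk_singleton_self, zero_add,
    ← map_pow, mul_pow, C_pow]

theorem mk_pow_eq_zero (hγe : γ ^ e = 0) (hQ : u ^ P = q + C γ * h) :
    Ideal.Quotient.mk (Ideal.span {q}) (u ^ (e * P)) = 0 := by
  rw [mk_pow_mul_eq hQ, hγe, C_0, zero_mul, map_zero]

theorem isUnit_mk_C_add_mul {w : R} (hw : IsUnit w) (K : R[X])
    (hu : IsNilpotent (Ideal.Quotient.mk (Ideal.span {q}) u)) :
    IsUnit (Ideal.Quotient.mk (Ideal.span {q}) (C w + u * K)) := by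
  rw [map_add, map_mul]
  exact (Commute.all _ _).isNilpotent_mul_right hu |>.isUnit_add_left_of_commute
    ((hw.map C).map _) (Commute.all _ _)

theorem mk_pow_mul_add_eq (hQ : u ^ P = q + C γ * h) (j t : ℕ) :
    Ideal.Quotient.mk (Ideal.span {q}) (u ^ (j * P + t)) =
      Ideal.Quotient.mk (Ideal.span {q}) (C (γ ^ j) * u ^ t) *
        Ideal.Quotient.mk (Ideal.span {q}) h ^ j := by
  rw [pow_add, map_mul _ (u ^ (j * P)), mk_pow_mul_eq hQ]
  simp only [map_mul, map_pow]
  ring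

theorem mk_C_mul_pow_mem_span (hQ : u ^ P = q + C γ * h)
    (hh : IsUnit (Ideal.Quotient.mk (Ideal.span {q}) h)) {j t ν : ℕ} (hν : ν ≤ j * P + t) :
    Ideal.Quotient.mk (Ideal.span {q}) (C (γ ^ j) * u ^ t) ∈
      Ideal.span {Ideal.Quotient.mk (Ideal.span {q}) (u ^ ν)} := by
  rw [Ideal.mem_span_singleton, ← (hh.pow j).dvd_mul_right, ← mk_pow_mul_add_eq hQ]
  exact map_dvd _ (pow_dvd_pow u hν)

theorem exists_polyRep_eq_C_mul (hq : q.Monic) (hQ : u ^ P = q + C γ * h) {j t : ℕ}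
    (ht : t ≤ P) {c : R[X] ⧸ Ideal.span {q}}
    (hc : c ∈ Ideal.span {Ideal.Quotient.mk (Ideal.span {q}) (u ^ (j * P + t))}) :
    ∃ G : R[X], polyRep q c = C (γ ^ j) * G ∧
      (u.map (Ideal.Quotient.mk (Ideal.span {γ}))) ^ t ∣
        G.map (Ideal.Quotient.mk (Ideal.span {γ})) := by
  obtain ⟨a, rfl⟩ := Ideal.mem_span_singleton'.1 hc
  obtain ⟨A, rfl⟩ := Ideal.Quotient.mk_surjective a
  set π := Ideal.Quotient.mk (Ideal.span {γ})
  refine ⟨(A * h ^ j * u ^ t) %ₘ q, ?_, ?_⟩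
  · have hc : Ideal.Quotient.mk (Ideal.span {q}) A *
        Ideal.Quotient.mk (Ideal.span {q}) (u ^ (j * P + t)) =
        Ideal.Quotient.mk (Ideal.span {q}) (C (γ ^ j) * (A * h ^ j * u ^ t)) := by
      rw [mk_pow_mul_add_eq hQ]
      simp only [map_mul, map_pow]
      ring
    rw [hc, polyRep_mk hq, ← smul_eq_C_mul, smul_modByMonic, smul_eq_C_mul]
  · rw [map_modByMonic π hq, modByMonic_eq_sub_mul_div, map_eq_pow_of_pow_eq_add hQ]
    refine dvd_sub ⟨(A * h ^ j).map π, ?_⟩ (dvd_mul_of_dvd_left (pow_dvd_pow _ ht) _)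
    rw [Polynomial.map_mul, Polynomial.map_pow, mul_comm]

section Distance

variable [(Ideal.span {γ}).IsMaximal] {j : ℕ}

theorem natDegree_eq_mul_of_pow_eq_add (hq : q.Monic) (hu : u.Monic)
    (hQ : u ^ P = q + C γ * h) : q.natDegree = P * u.natDegree := by
  rw [← hq.natDegree_map (Ideal.Quotient.mk (Ideal.span {γ})), map_eq_pow_of_pow_eq_add hQ,
    (hu.map _).natDegree_pow, hu.natDegree_map]

theorem natDegree_C_mul_pow (hann : ∀ b, γ ^ j * b = 0 ↔ b ∈ Ideal.span {γ}) (hu : u.Monic)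
    (t : ℕ) : (C (γ ^ j) * u ^ t).natDegree = t * u.natDegree := by
  rw [natDegree_C_mul_eq_natDegree_map hann, Polynomial.map_pow, (hu.map _).natDegree_pow,
    hu.natDegree_map]

theorem C_mul_pow_ne_zero (hann : ∀ b, γ ^ j * b = 0 ↔ b ∈ Ideal.span {γ}) (hu : u.Monic)
    (t : ℕ) : C (γ ^ j) * u ^ t ≠ 0 := by
  rw [Ne, C_mul_eq_zero_iff_map_eq_zero hann, Polynomial.map_pow]
  exact ((hu.map _).pow t).ne_zero

theorem le_natDegree_polyRep (hann : ∀ b, γ ^ j * b = 0 ↔ b ∈ Ideal.span {γ}) (hq : q.Monic)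
    (hu : u.Monic) (hQ : u ^ P = q + C γ * h) {t : ℕ} (ht : t ≤ P) {c : R[X] ⧸ Ideal.span {q}}
    (hc : c ∈ Ideal.span {Ideal.Quotient.mk (Ideal.span {q}) (u ^ (j * P + t))}) (hc0 : c ≠ 0) :
    t * u.natDegree ≤ (polyRep q c).natDegree := by
  obtain ⟨G, hG, hdvd⟩ := exists_polyRep_eq_C_mul hq hQ ht hc
  have hG0 : G.map (Ideal.Quotient.mk (Ideal.span {γ})) ≠ 0 := by
    rw [Ne, ← C_mul_eq_zero_iff_map_eq_zero hann, ← hG]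
    exact fun h0 => hc0 (by rw [← mk_polyRep c, h0, map_zero])
  rw [hG, natDegree_C_mul_eq_natDegree_map hann,
    ← hu.natDegree_map (Ideal.Quotient.mk (Ideal.span {γ})), ← (hu.map _).natDegree_pow]
  exact natDegree_le_of_dvd hdvd hG0

theorem mk_C_mul_pow_ne_zero_and_wRT (hann : ∀ b, γ ^ j * b = 0 ↔ b ∈ Ideal.span {γ})
    (hq : q.Monic) (hu : u.Monic) (hQ : u ^ P = q + C γ * h) {t : ℕ} (ht : t < P)
    (hu0 : 0 < u.natDegree) :
    Ideal.Quotient.mk (Ideal.span {q}) (C (γ ^ j) * u ^ t) ≠ 0 ∧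
      wRT q (Ideal.Quotient.mk (Ideal.span {q}) (C (γ ^ j) * u ^ t)) = t * u.natDegree + 1 := by
  have : Nontrivial R := (Ideal.Quotient.mk (Ideal.span {γ})).domain_nontrivial
  have hdeg : (C (γ ^ j) * u ^ t).degree < q.degree := by
    refine degree_lt_degree ?_
    rw [natDegree_C_mul_pow hann hu, natDegree_eq_mul_of_pow_eq_add hq hu hQ]
    exact Nat.mul_lt_mul_of_pos_right ht hu0
  refine ⟨mk_ne_zero_of_degree_lt hq (C_mul_pow_ne_zero hann hu t) hdeg, ?_⟩
  rw [wRT_mk_of_degree_lt hq (C_mul_pow_ne_zero hann hu t) hdeg, natDegree_C_mul_pow hann hu]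

theorem dRT_span_mk_pow_of_le (hann : ∀ b, γ ^ j * b = 0 ↔ b ∈ Ideal.span {γ})
    (hq : q.Monic) (hu : u.Monic) (hQ : u ^ P = q + C γ * h)
    (hh : IsUnit (Ideal.Quotient.mk (Ideal.span {q}) h)) (hP : 0 < P) (hu0 : 0 < u.natDegree)
    {ν : ℕ} (hν : ν ≤ j * P) :
    dRT q (Ideal.span {Ideal.Quotient.mk (Ideal.span {q}) (u ^ ν)}) = 1 := by
  obtain ⟨hne, hwt⟩ := mk_C_mul_pow_ne_zero_and_wRT hann hq hu hQ hP hu0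
  rw [zero_mul, zero_add] at hwt
  rw [← hwt]
  refine dRT_eq_of_forall_le (mk_C_mul_pow_mem_span hQ hh (t := 0) hν) hne fun c _ hc0 => ?_
  rw [hwt, wRT_of_ne_zero hc0]
  exact Nat.le_add_left 1 _

theorem dRT_span_mk_pow_add (hann : ∀ b, γ ^ j * b = 0 ↔ b ∈ Ideal.span {γ})
    (hq : q.Monic) (hu : u.Monic) (hQ : u ^ P = q + C γ * h)
    (hh : IsUnit (Ideal.Quotient.mk (Ideal.span {q}) h)) {t : ℕ} (ht : t < P)
    (hu0 : 0 < u.natDegree) :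
    dRT q (Ideal.span {Ideal.Quotient.mk (Ideal.span {q}) (u ^ (j * P + t))}) =
      t * u.natDegree + 1 := by
  obtain ⟨hne, hwt⟩ := mk_C_mul_pow_ne_zero_and_wRT hann hq hu hQ ht hu0
  rw [← hwt]
  refine dRT_eq_of_forall_le (mk_C_mul_pow_mem_span hQ hh le_rfl) hne fun c hc hc0 => ?_
  rw [hwt, wRT_of_ne_zero hc0]
  exact Nat.succ_le_succ (le_natDegree_polyRep hann hq hu hQ ht.le hc hc0)

end Distance

end ConstacyclicCode

theorem stmt18_general {R : Type} [CommRing R]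
    (e p m s n : ℕ) (he : 2 ≤ e) (hp : p.Prime) (hn : 0 < n)
    (γ : R) (hγ : γ ^ (e - 1) ≠ 0) (hγe : γ ^ e = 0)
    (hmax : ∀ a : R, a ∈ Ideal.span {γ} ↔ ¬ IsUnit a)
    (hres : Nat.card (R ⧸ Ideal.span {γ}) = p ^ m)
    (l₀ w : R) (hw : IsUnit w)
    (ν : ℕ) :
    (ν ≤ (e - 1) * p ^ s →
      dRT (X ^ (n * p ^ s) - C (l₀ ^ p ^ s + γ * w))
        (Ideal.span {Ideal.Quotient.mk
          (Ideal.span {(X ^ (n * p ^ s) - C (l₀ ^ p ^ s + γ * w) : R[X])})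
          ((X ^ n - C l₀) ^ ν)}) = 1) ∧
    ((e - 1) * p ^ s + 1 ≤ ν → ν ≤ e * p ^ s - 1 →
      dRT (X ^ (n * p ^ s) - C (l₀ ^ p ^ s + γ * w))
        (Ideal.span {Ideal.Quotient.mk
          (Ideal.span {(X ^ (n * p ^ s) - C (l₀ ^ p ^ s + γ * w) : R[X])})
          ((X ^ n - C l₀) ^ ν)}) = n * ν - n * (e - 1) * p ^ s + 1) ∧
    (ν = e * p ^ s →
      dRT (X ^ (n * p ^ s) - C (l₀ ^ p ^ s + γ * w))
        (Ideal.span {Ideal.Quotient.mk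
          (Ideal.span {(X ^ (n * p ^ s) - C (l₀ ^ p ^ s + γ * w) : R[X])})
          ((X ^ n - C l₀) ^ ν)}) = 0) := by
  have : Fact p.Prime := ⟨hp⟩
  have : Nontrivial R := nontrivial_of_ne _ _ hγ
  have : (Ideal.span {γ}).IsMaximal := Ideal.isMaximal_of_forall_mem_iff_not_isUnit hmax
  have : CharP (R ⧸ Ideal.span {γ}) p := charP_of_natCard_eq_prime_pow hres
  obtain ⟨K, hK⟩ := exists_X_pow_sub_C_pow_char_pow_eq (a := γ) l₀ hn.ne' s
  have hQ : (X ^ n - C l₀) ^ p ^ s =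
      X ^ (n * p ^ s) - C (l₀ ^ p ^ s + γ * w) + C γ * (C w + (X ^ n - C l₀) * K) := by
    rw [hK, C_add, C_mul]
    ring
  have hq := monic_X_pow_sub_C (l₀ ^ p ^ s + γ * w)
    (Nat.mul_ne_zero hn.ne' (pow_ne_zero s hp.ne_zero))
  have hu := monic_X_pow_sub_C l₀ hn.ne'
  have hu0 : 0 < (X ^ n - C l₀ : R[X]).natDegree := by rwa [natDegree_X_pow_sub_C]
  have hh := isUnit_mk_C_add_mul hw K ⟨_, mk_pow_eq_zero hγe hQ⟩
  have hann := pow_pred_mul_eq_zero_iff_mem_span hγ hγe hmax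
  have he_mul : e * p ^ s = (e - 1) * p ^ s + p ^ s := by
    conv_lhs => rw [← Nat.sub_add_cancel (by omega : 1 ≤ e)]
    rw [add_mul, one_mul]
  refine ⟨fun hν => dRT_span_mk_pow_of_le hann hq hu hQ hh (pow_pos hp.pos s) hu0 hν,
    fun hν₁ hν₂ => ?_, fun hν => ?_⟩
  · obtain ⟨t, rfl⟩ := Nat.exists_eq_add_of_le (Nat.le_of_succ_le hν₁)
    rw [dRT_span_mk_pow_add hann hq hu hQ hh (by omega) hu0, natDegree_X_pow_sub_C, mul_add,
      mul_assoc, Nat.add_sub_cancel_left, mul_comm]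
  · rw [hν, mk_pow_eq_zero hγe hQ, Ideal.span_singleton_eq_bot.2 rfl, dRT_bot]

/-- RT distances of the `λ`-constacyclic codes `⟨(x^n − λ₀)^ν⟩` of
length `np^s` over a finite chain ring of nilpotency index `e`, `λ = λ₀^{p^s} + γw`. -/
theorem stmt18 {R : Type} [CommRing R] [Finite R]
    (e p m s n : ℕ) (he : 2 ≤ e) (hp : p.Prime) (hm : 0 < m) (hs : 0 < s) (hn : 0 < n)
    (hnp : Nat.gcd n p = 1)
    (γ : R) (hγ : γ ^ (e - 1) ≠ 0) (hγe : γ ^ e = 0)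
    (hmax : ∀ a : R, a ∈ Ideal.span {γ} ↔ ¬ IsUnit a)
    (hres : Nat.card (R ⧸ Ideal.span {γ}) = p ^ m)
    (l₀ w : R) (hl₀ : IsUnit l₀) (hw : IsUnit w)
    (hirr : Irreducible ((X ^ n - C l₀ : R[X]).map (Ideal.Quotient.mk (Ideal.span {γ}))))
    (ν : ℕ) (hν : ν ≤ e * p ^ s) :
    (ν ≤ (e - 1) * p ^ s →
      dRT (X ^ (n * p ^ s) - C (l₀ ^ p ^ s + γ * w))
        (Ideal.span {Ideal.Quotient.mk
          (Ideal.span {(X ^ (n * p ^ s) - C (l₀ ^ p ^ s + γ * w) : R[X])})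
          ((X ^ n - C l₀) ^ ν)}) = 1) ∧
    ((e - 1) * p ^ s + 1 ≤ ν → ν ≤ e * p ^ s - 1 →
      dRT (X ^ (n * p ^ s) - C (l₀ ^ p ^ s + γ * w))
        (Ideal.span {Ideal.Quotient.mk
          (Ideal.span {(X ^ (n * p ^ s) - C (l₀ ^ p ^ s + γ * w) : R[X])})
          ((X ^ n - C l₀) ^ ν)}) = n * ν - n * (e - 1) * p ^ s + 1) ∧
    (ν = e * p ^ s →
      dRT (X ^ (n * p ^ s) - C (l₀ ^ p ^ s + γ * w))
        (Ideal.span {Ideal.Quotient.mk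
          (Ideal.span {(X ^ (n * p ^ s) - C (l₀ ^ p ^ s + γ * w) : R[X])})
          ((X ^ n - C l₀) ^ ν)}) = 0) :=
  stmt18_general e p m s n he hp hn γ hγ hγe hmax hres l₀ w hw ν
end
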